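/- arXiv:1810.00771 — 2 statements merged into one kernel-verified Lean document; each statement's English description precedes it below -/
import Mathlib

section
/- Let F = (Args, Atts) be an AAF, η ∉ Args, and B ⊆ Args. Let F↾(Args\B) = (Args \ B, Atts ∩ ((Args\B) × (Args\B))) be the induced sub-framework obtained by deleting the arguments in B, and let F_{η,B} = (Args ∪ {η}, Atts ∪ {(η,b) : b ∈ B}), in which η attacks exactly the arguments of B and is attacked by no argument. Then for every S ⊆ Args \ B: S is preferred in F↾(Args\B) if and only if S ∪ {η} is preferred in F_{η,B}. -/
variable {α : Type*}

def conflictFree (Atts : Set (α × α)) (S : Set α) : Prop :=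
  ∀ a ∈ S, ∀ b ∈ S, (a, b) ∉ Atts

def acceptable (Args : Set α) (Atts : Set (α × α)) (S : Set α) (a : α) : Prop :=
  ∀ b ∈ Args, (b, a) ∈ Atts → ∃ c ∈ S, (c, b) ∈ Atts

def admissible (Args : Set α) (Atts : Set (α × α)) (S : Set α) : Prop :=
  S ⊆ Args ∧ conflictFree Atts S ∧ ∀ a ∈ S, acceptable Args Atts S a

def preferred (Args : Set α) (Atts : Set (α × α)) (S : Set α) : Prop :=
  admissible Args Atts S ∧ ∀ T : Set α, admissible Args Atts T → S ⊆ T → T = S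

theorem aux_adm_7 (Args : Set α) (Atts : Set (α × α))
    (hAtts : Atts ⊆ Args ×ˢ Args) (η : α) (hη : η ∉ Args)
    (B : Set α) (hB : B ⊆ Args)
    (S : Set α) (hS : S ⊆ Args \ B) :
    admissible (Args \ B) (Atts ∩ ((Args \ B) ×ˢ (Args \ B))) S ↔
      admissible (Args ∪ {η}) (Atts ∪ {q : α × α | ∃ b ∈ B, q = (η, b)}) (S ∪ {η}) := by
  constructor
  · rintro ⟨hsub, hcf, hacc⟩
    refine ⟨?_, ?_, ?_⟩
    · rintro x (hx | hx)
      · exact Or.inl (hS hx).1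
      · exact Or.inr hx
    · rintro a ha b hb (hab | ⟨b', hb', heq⟩)
      · rcases ha with ha | ha
        · rcases hb with hb | hb
          · exact hcf a ha b hb ⟨hab, (hS ha), (hS hb)⟩
          · rw [Set.mem_singleton_iff] at hb; subst hb
            exact hη (hAtts hab).2
        · rw [Set.mem_singleton_iff] at ha; subst ha
          exact hη (hAtts hab).1
      · have ha' : a = η := congrArg Prod.fst heq
        have hb2 : b = b' := congrArg Prod.snd heq
        subst ha'; subst hb2
        rcases hb with hb | hb
        · exact (hS hb).2 hb'
        · rw [Set.mem_singleton_iff] at hb; subst hb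
          exact hη (hB hb')
    · rintro a ha b hb hba
      rcases hba with hba | ⟨b'', hb'', heq⟩
      · have hbA : b ∈ Args := (hAtts hba).1
        rcases ha with ha | ha
        · by_cases hbB : b ∈ B
          · exact ⟨η, Or.inr rfl, Or.inr ⟨b, hbB, rfl⟩⟩
          · obtain ⟨c, hc, hcb⟩ := hacc a ha b ⟨hbA, hbB⟩ ⟨hba, ⟨hbA, hbB⟩, hS ha⟩
            exact ⟨c, Or.inl hc, Or.inl hcb.1⟩
        · rw [Set.mem_singleton_iff] at ha; subst ha
          exact absurd (hAtts hba).2 hη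
      · have hb1 : b = η := congrArg Prod.fst heq
        have ha1 : a = b'' := congrArg Prod.snd heq
        subst hb1; subst ha1
        rcases ha with ha | ha
        · exact absurd hb'' (hS ha).2
        · rw [Set.mem_singleton_iff] at ha
          exact absurd (hB hb'') (ha ▸ hη)
  · rintro ⟨hsub, hcf, hacc⟩
    refine ⟨hS, ?_, ?_⟩
    · intro a ha b hb hab
      exact hcf a (Or.inl ha) b (Or.inl hb) (Or.inl hab.1)
    · intro a ha b hb hba
      obtain ⟨c, hc, hcb⟩ := hacc a (Or.inl ha) b (Or.inl hb.1) (Or.inl hba.1)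
      rcases hcb with hcb | ⟨b', hb', heq⟩
      · rcases hc with hc | hc
        · exact ⟨c, hc, hcb, hS hc, hb⟩
        · rw [Set.mem_singleton_iff] at hc; subst hc
          exact absurd (hAtts hcb).1 hη
      · have hb1 : b = b' := congrArg Prod.snd heq
        exact absurd (hb1 ▸ hb') hb.2

theorem stmt_7 (Args : Set α) (Atts : Set (α × α))
    (hAtts : Atts ⊆ Args ×ˢ Args) (η : α) (hη : η ∉ Args)
    (B : Set α) (hB : B ⊆ Args)
    (S : Set α) (hS : S ⊆ Args \ B) :
    preferred (Args \ B) (Atts ∩ ((Args \ B) ×ˢ (Args \ B))) S ↔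
      preferred (Args ∪ {η}) (Atts ∪ {q : α × α | ∃ b ∈ B, q = (η, b)}) (S ∪ {η}) := by
  have hηS : η ∉ S := fun h => hη (hS h).1
  constructor
  · rintro ⟨hadm, hmax⟩
    refine ⟨(aux_adm_7 Args Atts hAtts η hη B hB S hS).mp hadm, ?_⟩
    intro T hT hST
    have hηT : η ∈ T := hST (Or.inr rfl)
    set T₀ := T \ {η} with hT₀def
    have hT₀sub : T₀ ⊆ Args \ B := by
      rintro x ⟨hxT, hxη⟩
      rcases hT.1 hxT with hx | hx
      · refine ⟨hx, fun hxB => ?_⟩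
        exact hT.2.1 η hηT x hxT (Or.inr ⟨x, hxB, rfl⟩)
      · exact absurd hx hxη
    have hT₀adm : admissible (Args \ B) (Atts ∩ ((Args \ B) ×ˢ (Args \ B))) T₀ := by
      refine ⟨hT₀sub, ?_, ?_⟩
      · intro a ha b hb hab
        exact hT.2.1 a ha.1 b hb.1 (Or.inl hab.1)
      · intro a ha b hb hba
        obtain ⟨c, hc, hcb⟩ := hT.2.2 a ha.1 b (Or.inl hb.1) (Or.inl hba.1)
        rcases hcb with hcb | ⟨b', hb', heq⟩
        · have hcη : c ≠ η := fun h => hη (h ▸ (hAtts hcb).1)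
          exact ⟨c, ⟨hc, hcη⟩, hcb, hT₀sub ⟨hc, hcη⟩, hb⟩
        · have hb1 : b = b' := congrArg Prod.snd heq
          exact absurd (hb1 ▸ hb') hb.2
    have hST₀ : S ⊆ T₀ := fun x hx => ⟨hST (Or.inl hx), fun h => hηS (h ▸ hx)⟩
    have hT₀eq : T₀ = S := hmax T₀ hT₀adm hST₀
    ext x
    constructor
    · intro hx
      by_cases hxη : x = η
      · exact Or.inr hxη
      · exact Or.inl (hT₀eq ▸ (⟨hx, hxη⟩ : x ∈ T₀))
    · rintro (hx | hx)
      · exact hST (Or.inl hx)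
      · exact hx ▸ hηT
  · rintro ⟨hadm, hmax⟩
    refine ⟨(aux_adm_7 Args Atts hAtts η hη B hB S hS).mpr hadm, ?_⟩
    intro T hT hST
    have hTsub : T ⊆ Args \ B := hT.1
    have hT'adm := (aux_adm_7 Args Atts hAtts η hη B hB T hTsub).mp hT
    have h1 : T ∪ {η} = S ∪ {η} :=
      hmax (T ∪ {η}) hT'adm (Set.union_subset_union_left _ hST)
    have hηT : η ∉ T := fun h => hη (hTsub h).1
    ext x
    constructor
    · intro hx
      have : x ∈ S ∪ {η} := h1 ▸ (Or.inl hx : x ∈ T ∪ {η})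
      rcases this with h | h
      · exact h
      · exact absurd (h ▸ hx) hηT
    · intro hx
      have : x ∈ T ∪ {η} := h1 ▸ (Or.inl hx : x ∈ S ∪ {η})
      rcases this with h | h
      · exact h
      · exact absurd (h ▸ hx) hηS
end

section
/- Let F = (Args, Atts) be an AAF, η ∉ Args, and B ⊆ Args. Let F↾(Args\B) = (Args \ B, Atts ∩ ((Args\B) × (Args\B))) be the induced sub-framework obtained by deleting the arguments in B, and let F_{η,B} = (Args ∪ {η}, Atts ∪ {(η,b) : b ∈ B}), in which η attacks exactly the arguments of B and is attacked by no argument. Then for every S ⊆ Args \ B: S is grounded in F↾(Args\B) if and only if S ∪ {η} is grounded in F_{η,B}. -/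
variable {α : Type*}

def complete (Args : Set α) (Atts : Set (α × α)) (S : Set α) : Prop :=
  admissible Args Atts S ∧ ∀ a ∈ Args, acceptable Args Atts S a → a ∈ S

def grounded (Args : Set α) (Atts : Set (α × α)) (S : Set α) : Prop :=
  complete Args Atts S ∧ ∀ T : Set α, complete Args Atts T → T ⊆ S → T = S

lemma aux_complete_iff (Args : Set α) (Atts : Set (α × α))
    (hAtts : Atts ⊆ Args ×ˢ Args) (η : α) (hη : η ∉ Args)
    (B : Set α) (hB : B ⊆ Args)
    (S : Set α) (hS : S ⊆ Args \ B) :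
    complete (Args \ B) (Atts ∩ ((Args \ B) ×ˢ (Args \ B))) S ↔
      complete (Args ∪ {η}) (Atts ∪ {q : α × α | ∃ b ∈ B, q = (η, b)}) (S ∪ {η}) := by
  set Atts' := Atts ∩ ((Args \ B) ×ˢ (Args \ B)) with hA'
  set bigAtts := Atts ∪ {q : α × α | ∃ b ∈ B, q = (η, b)} with hBA
  -- basic facts
  have hηS : η ∉ S := fun h => hη (hS h).1
  have noatkη : ∀ c, (c, η) ∉ bigAtts := by
    rintro c (h | ⟨b, hb, h⟩)
    · exact hη (hAtts h).2
    · have h2 : η = b := congrArg Prod.snd h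
      exact hη (hB (by rw [h2]; exact hb))
  have ηatk : ∀ b, (η, b) ∈ bigAtts ↔ b ∈ B := by
    intro b
    constructor
    · rintro (h | ⟨b', hb', h⟩)
      · exact absurd (hAtts h).1 hη
      · have h2 : b = b' := congrArg Prod.snd h
        rw [h2]; exact hb'
    · intro hb; exact Or.inr ⟨b, hb, rfl⟩
  have srcη : ∀ c b, c ≠ η → (c, b) ∈ bigAtts → (c, b) ∈ Atts := by
    rintro c b hne (h | ⟨b', hb', h⟩)
    · exact h
    · exact absurd (congrArg Prod.fst h) hne
  constructor
  · rintro ⟨⟨hsub, hcf, hacc⟩, hcomp⟩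
    refine ⟨⟨?_, ?_, ?_⟩, ?_⟩
    · intro a ha
      rcases ha with ha | ha
      · exact Or.inl (hsub ha).1
      · exact Or.inr ha
    · rintro a (ha | ha) b (hb | hb) hab
      · rcases hab with h | ⟨b', hb', h⟩
        · exact hcf a ha b hb ⟨h, hsub ha, hsub hb⟩
        · have h1 : a = η := congrArg Prod.fst h
          exact hη (h1 ▸ (hsub ha).1)
      · rw [Set.mem_singleton_iff] at hb
        exact noatkη a (hb ▸ hab)
      · rw [Set.mem_singleton_iff] at ha
        exact (hsub hb).2 ((ηatk b).1 (ha ▸ hab))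
      · rw [Set.mem_singleton_iff] at ha
        rw [Set.mem_singleton_iff] at hb
        rw [hb] at hab
        exact noatkη a hab
    · rintro a (ha | ha) b hb hba
      · -- a ∈ S
        have hbne : b ≠ η := by
          rintro rfl
          rcases hba with h | ⟨b', hb', h⟩
          · exact hη (hAtts h).1
          · have h2 : a = b' := congrArg Prod.snd h
            exact (hS ha).2 (by rw [h2]; exact hb')
        have hbA : b ∈ Args := by
          rcases hb with hb | hb
          · exact hb
          · exact absurd hb hbne
        have hbaA : (b, a) ∈ Atts := srcη b a hbne hba
        by_cases hbB : b ∈ B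
        · exact ⟨η, Or.inr rfl, (ηatk b).2 hbB⟩
        · have : (b, a) ∈ Atts' := ⟨hbaA, ⟨hbA, hbB⟩, hsub ha⟩
          obtain ⟨c, hc, hcb⟩ := hacc a ha b ⟨hbA, hbB⟩ this
          exact ⟨c, Or.inl hc, Or.inl hcb.1⟩
      · rw [Set.mem_singleton_iff] at ha
        exact absurd (ha ▸ hba) (noatkη b)
    · rintro a (ha | ha) hacca
      · by_cases haB : a ∈ B
        · exfalso
          obtain ⟨c, hc, hcη⟩ := hacca η (Or.inr rfl) ((ηatk a).2 haB)
          exact noatkη c hcη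
        · left
          refine hcomp a ⟨ha, haB⟩ ?_
          intro b hb hba
          have hbne : b ≠ η := fun h => hη (h ▸ hb.1)
          obtain ⟨c, hc, hcb⟩ := hacca b (Or.inl hb.1) (Or.inl hba.1)
          have hcne : c ≠ η := by
            rintro rfl
            rcases hc with hc | hc
            · exact hηS hc
            · exact hb.2 ((ηatk b).1 hcb)
          have hcS : c ∈ S := by
            rcases hc with hc | hc
            · exact hc
            · exact absurd hc hcne
          exact ⟨c, hcS, srcη c b hcne hcb, hS hcS, hb⟩
      · exact Or.inr ha
  · rintro ⟨⟨hsub, hcf, hacc⟩, hcomp⟩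
    refine ⟨⟨hS, ?_, ?_⟩, ?_⟩
    · intro a ha b hb hab
      exact hcf a (Or.inl ha) b (Or.inl hb) (Or.inl hab.1)
    · intro a ha b hb hba
      obtain ⟨c, hc, hcb⟩ := hacc a (Or.inl ha) b (Or.inl hb.1) (Or.inl hba.1)
      have hcne : c ≠ η := by
        rintro rfl
        rcases hc with hc | hc
        · exact hηS hc
        · exact hb.2 ((ηatk b).1 hcb)
      have hcS : c ∈ S := by
        rcases hc with hc | hc
        · exact hc
        · exact absurd hc hcne
      exact ⟨c, hcS, srcη c b hcne hcb, hS hcS, hb⟩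
    · intro a ha hacca
      have haη : a ≠ η := fun h => hη (h ▸ ha.1)
      have : a ∈ S ∪ {η} := by
        refine hcomp a (Or.inl ha.1) ?_
        rintro b hb hba
        by_cases hbne : b = η
        · subst hbne
          exact absurd ((ηatk a).1 hba) ha.2
        · have hbA : b ∈ Args := by
            rcases hb with hb | hb
            · exact hb
            · exact absurd hb hbne
          have hbaA : (b, a) ∈ Atts := srcη b a hbne hba
          by_cases hbB : b ∈ B
          · exact ⟨η, Or.inr rfl, (ηatk b).2 hbB⟩
          · obtain ⟨c, hc, hcb⟩ := hacca b ⟨hbA, hbB⟩ ⟨hbaA, ⟨hbA, hbB⟩, ha⟩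
            exact ⟨c, Or.inl hc, Or.inl hcb.1⟩
      rcases this with h | h
      · exact h
      · exact absurd h haη

theorem stmt_8 (Args : Set α) (Atts : Set (α × α))
    (hAtts : Atts ⊆ Args ×ˢ Args) (η : α) (hη : η ∉ Args)
    (B : Set α) (hB : B ⊆ Args)
    (S : Set α) (hS : S ⊆ Args \ B) :
    grounded (Args \ B) (Atts ∩ ((Args \ B) ×ˢ (Args \ B))) S ↔
      grounded (Args ∪ {η}) (Atts ∪ {q : α × α | ∃ b ∈ B, q = (η, b)}) (S ∪ {η}) := by
  set bigAtts := Atts ∪ {q : α × α | ∃ b ∈ B, q = (η, b)} with hBA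
  have noatkη : ∀ c, (c, η) ∉ bigAtts := by
    rintro c (h | ⟨b, hb, h⟩)
    · exact hη (hAtts h).2
    · have h2 : η = b := congrArg Prod.snd h
      exact hη (hB (by rw [h2]; exact hb))
  have ηatk : ∀ b, (η, b) ∈ bigAtts ↔ b ∈ B := by
    intro b
    constructor
    · rintro (h | ⟨b', hb', h⟩)
      · exact absurd (hAtts h).1 hη
      · have h2 : b = b' := congrArg Prod.snd h
        rw [h2]; exact hb'
    · intro hb; exact Or.inr ⟨b, hb, rfl⟩
  constructor
  · rintro ⟨hcS, hmin⟩
    refine ⟨(aux_complete_iff Args Atts hAtts η hη B hB S hS).1 hcS, ?_⟩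
    intro T hcT hTsub
    have hηT : η ∈ T := by
      refine hcT.2 η (Or.inr rfl) ?_
      intro b hb hbη
      exact absurd hbη (noatkη b)
    set T' := T \ {η} with hT'
    have hT'sub : T' ⊆ Args \ B := by
      rintro a ⟨haT, haη⟩
      have haA : a ∈ Args := by
        rcases hcT.1.1 haT with h | h
        · exact h
        · exact absurd h haη
      refine ⟨haA, fun haB => ?_⟩
      exact hcT.1.2.1 η hηT a haT ((ηatk a).2 haB)
    have hTeq : T = T' ∪ {η} := by
      ext x
      constructor
      · intro hx
        by_cases hxe : x = η
        · exact Or.inr hxe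
        · exact Or.inl ⟨hx, hxe⟩
      · rintro (hx | hx)
        · exact hx.1
        · exact hx ▸ hηT
    have hcT' : complete (Args \ B) (Atts ∩ ((Args \ B) ×ˢ (Args \ B))) T' := by
      refine (aux_complete_iff Args Atts hAtts η hη B hB T' hT'sub).2 ?_
      rwa [← hTeq]
    have hT'S : T' ⊆ S := by
      rintro a ⟨haT, haη⟩
      rcases hTsub haT with h | h
      · exact h
      · exact absurd h haη
    have := hmin T' hcT' hT'S
    rw [hTeq, this]
  · rintro ⟨hcS, hmin⟩
    refine ⟨(aux_complete_iff Args Atts hAtts η hη B hB S hS).2 hcS, ?_⟩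
    intro T hcT hTS
    have hTsub : T ⊆ Args \ B := hcT.1.1
    have hcT' := (aux_complete_iff Args Atts hAtts η hη B hB T hTsub).1 hcT
    have hTη : T ∪ {η} ⊆ S ∪ {η} := Set.union_subset_union_left _ hTS
    have heq := hmin (T ∪ {η}) hcT' hTη
    have hηT : η ∉ T := fun h => hη (hTsub h).1
    have hηS : η ∉ S := fun h => hη (hS h).1
    ext x
    constructor
    · intro hx
      have : x ∈ S ∪ {η} := heq ▸ Or.inl hx
      rcases this with h | h
      · exact h
      · exact absurd h (fun he => hηT (he ▸ hx))
    · intro hx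
      have : x ∈ T ∪ {η} := heq ▸ Or.inl hx
      rcases this with h | h
      · exact h
      · exact absurd (h ▸ hx) hηS
end
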